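/- arXiv:2512.19187 — 3 statements merged into one kernel-verified Lean document; each statement's English description precedes it below -/
import Mathlib

section
/- Knight's identity: for all real numbers y, q, and δ with y ≠ q, we have |y − (q + δ)| − |y − q| = −δ·sgn(y − q) + 2·∫₀^δ (𝟙{y ≤ q + s} − 𝟙{y ≤ q}) ds. -/
open MeasureTheory intervalIntegral Set

lemma knight_aux_integrable (a c d : ℝ) :
    IntervalIntegrable (fun s => if a ≤ s then (1 : ℝ) else 0) volume c d := by
  have h : (fun s => if a ≤ s then (1 : ℝ) else 0)
      = (Set.Ici a).indicator (fun _ => (1 : ℝ)) := by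
    ext s; by_cases h : a ≤ s <;> simp [h]
  rw [h]
  constructor <;>
    exact (integrableOn_const measure_Ioc_lt_top.ne).indicator measurableSet_Ici

lemma knight_aux_int (a δ : ℝ) :
    ∫ s in (0 : ℝ)..δ, (if a ≤ s then (1 : ℝ) else 0) = max δ a - max 0 a := by
  have hne : ∀ᵐ s : ℝ, s ≠ a := by
    refine (MeasureTheory.ae_iff).2 ?_
    simpa using Real.volume_singleton
  have h1 : ∫ s in a..δ, (if a ≤ s then (1 : ℝ) else 0) = max δ a - a := by
    rcases le_total a δ with h | h
    · rw [intervalIntegral.integral_congr (g := fun _ => (1 : ℝ))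
        (fun s hs => by
          rw [Set.uIcc_of_le h] at hs
          simp [hs.1]),
        intervalIntegral.integral_const]
      simp [max_eq_left h]
    · rw [intervalIntegral.integral_congr_ae (g := fun _ => (0 : ℝ)) ?_]
      · simp [max_eq_right h]
      · filter_upwards [hne] with s hs hmem
        rw [Set.uIoc_comm, Set.uIoc_of_le h] at hmem
        have : s < a := lt_of_le_of_ne hmem.2 hs
        simp [not_le.2 this]
  have h0 : ∫ s in (0 : ℝ)..a, (if a ≤ s then (1 : ℝ) else 0) = a - max 0 a := by
    rcases le_total a 0 with h | h
    · rw [intervalIntegral.integral_congr (g := fun _ => (1 : ℝ))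
        (fun s hs => by
          rw [Set.uIcc_comm, Set.uIcc_of_le h] at hs
          simp [hs.1]),
        intervalIntegral.integral_const]
      simp [max_eq_left h]
    · rw [intervalIntegral.integral_congr_ae (g := fun _ => (0 : ℝ)) ?_]
      · simp [max_eq_right h]
      · filter_upwards [hne] with s hs hmem
        rw [Set.uIoc_of_le h] at hmem
        have : s < a := lt_of_le_of_ne hmem.2 hs
        simp [not_le.2 this]
  rw [← intervalIntegral.integral_add_adjacent_intervals
    (knight_aux_integrable a 0 a) (knight_aux_integrable a a δ), h0, h1]
  ring

theorem knight_identity (y q δ : ℝ) (hyq : y ≠ q) :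
    |y - (q + δ)| - |y - q| =
      -δ * Real.sign (y - q) +
        2 * ∫ s in (0 : ℝ)..δ,
          ((if y ≤ q + s then (1 : ℝ) else 0) - (if y ≤ q then (1 : ℝ) else 0)) := by
  set a := y - q with ha
  have hiff : ∀ s : ℝ, (y ≤ q + s) = (a ≤ s) := by
    intro s; exact propext ⟨fun h => by simp only [ha]; linarith, fun h => by
      have : y - q ≤ s := h
      linarith⟩
  simp only [hiff]
  have hint : ∫ s in (0 : ℝ)..δ,
      ((if a ≤ s then (1 : ℝ) else 0) - (if y ≤ q then (1 : ℝ) else 0))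
      = (max δ a - max 0 a) - δ * (if y ≤ q then (1 : ℝ) else 0) := by
    rw [intervalIntegral.integral_sub (knight_aux_integrable a 0 δ)
      (intervalIntegrable_const), knight_aux_int, intervalIntegral.integral_const,
      smul_eq_mul]
    ring
  rw [hint]
  rcases lt_or_gt_of_ne (sub_ne_zero.2 hyq) with hlt | hgt
  · -- a < 0, y < q
    have hs : Real.sign a = -1 := Real.sign_of_neg hlt
    have hyq' : y ≤ q := le_of_lt (by linarith [hlt] : y < q)
    rw [hs, if_pos hyq']
    have hmax0 : max 0 a = 0 := max_eq_left hlt.le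
    rw [hmax0]
    have habs : |a| = -a := abs_of_neg hlt
    have : y - (q + δ) = a - δ := by rw [ha]; ring
    rw [this, habs]
    rcases le_total δ a with h | h
    · rw [abs_of_nonneg (by linarith : (0:ℝ) ≤ a - δ), max_eq_right h]; ring
    · rw [abs_of_nonpos (by linarith : a - δ ≤ 0), max_eq_left h]; ring
  · -- a > 0, y > q
    have hs : Real.sign a = 1 := Real.sign_of_pos hgt
    have hyq' : ¬ y ≤ q := not_le.2 (by linarith [hgt] : q < y)
    rw [hs, if_neg hyq']
    have hmax0 : max 0 a = a := max_eq_right hgt.le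
    rw [hmax0]
    have habs : |a| = a := abs_of_pos hgt
    have hrw : y - (q + δ) = a - δ := by rw [ha]; ring
    rw [hrw, habs]
    rcases le_total δ a with h | h
    · rw [abs_of_nonneg (by linarith : (0:ℝ) ≤ a - δ), max_eq_right h]; ring
    · rw [abs_of_nonpos (by linarith : a - δ ≤ 0), max_eq_left h]; ring
end

section
/- Let F be continuous and strictly increasing, h > 0, z ∈ (-1,1), and m the mean. If q(z,0) = F⁻¹((1−z)/2) < m, then the map h ↦ q(z,h) is strictly increasing in h and satisfies q(z,0) < q(z,h) < m for all h > 0; symmetrically, if q(z,0) > m then h ↦ q(z,h) is strictly decreasing with m < q(z,h) < q(z,0). -/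
theorem monotone_in_h_toward_mean (F : ℝ → ℝ) (hFc : Continuous F) (hFsm : StrictMono F)
    (z m : ℝ) (hz : z ∈ Set.Ioo (-1 : ℝ) 1)
    (q : ℝ → ℝ)
    (hq0 : F (q 0) = (1 - z) / 2)
    (hsol : ∀ h : ℝ, 0 < h → F (q h) + h / 2 * q h = (1 - z + h * m) / 2) :
    (q 0 < m →
      StrictMonoOn q (Set.Ioi (0 : ℝ)) ∧ ∀ h : ℝ, 0 < h → q 0 < q h ∧ q h < m) ∧
    (m < q 0 →
      StrictAntiOn q (Set.Ioi (0 : ℝ)) ∧ ∀ h : ℝ, 0 < h → m < q h ∧ q h < q 0) := by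
  have key : ∀ h : ℝ, 0 < h → F (q h) + h / 2 * q h = F (q 0) + h / 2 * m := by
    intro h hh
    rw [hsol h hh, hq0]; ring
  constructor
  · intro hlt
    have hb : ∀ h : ℝ, 0 < h → q 0 < q h ∧ q h < m := by
      intro h hh
      have e := key h hh
      constructor
      · by_contra hc
        push_neg at hc
        have hF : F (q h) ≤ F (q 0) := hFsm.le_iff_le.mpr hc
        nlinarith
      · by_contra hc
        push_neg at hc
        have hF : F (q 0) < F (q h) := hFsm (lt_of_lt_of_le hlt hc)
        nlinarith
    refine ⟨?_, hb⟩
    intro h1 h1m h2 h2m h12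
    simp only [Set.mem_Ioi] at h1m h2m
    have e1 := key h1 h1m
    have e2 := key h2 h2m
    have hm2 := (hb h2 h2m).2
    by_contra hc
    push_neg at hc
    have hF : F (q h2) ≤ F (q h1) := hFsm.le_iff_le.mpr hc
    nlinarith
  · intro hlt
    have hb : ∀ h : ℝ, 0 < h → m < q h ∧ q h < q 0 := by
      intro h hh
      have e := key h hh
      constructor
      · by_contra hc
        push_neg at hc
        have hF : F (q h) < F (q 0) := hFsm (lt_of_le_of_lt hc hlt)
        nlinarith
      · by_contra hc
        push_neg at hc
        have hF : F (q 0) ≤ F (q h) := hFsm.le_iff_le.mpr hc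
        nlinarith
    refine ⟨?_, hb⟩
    intro h1 h1m h2 h2m h12
    simp only [Set.mem_Ioi] at h1m h2m
    have e1 := key h1 h1m
    have e2 := key h2 h2m
    have hm2 := (hb h2 h2m).1
    by_contra hc
    push_neg at hc
    have hF : F (q h1) ≤ F (q h2) := hFsm.le_iff_le.mpr hc
    nlinarith
end

section
/- Let F be a continuous strictly increasing CDF with mean m, fix z ∈ (-1,1), and let q(z,h) be the unique solution of F(q) + (h/2)q = (1 − z + hm)/2 for h > 0. Then q(z,h) → m as h → ∞. -/
theorem smoothed_quantile_tendsto_mean (F : ℝ → ℝ) (hFc : Continuous F)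
    (hFsm : StrictMono F) (hFbdd : ∀ x, F x ∈ Set.Icc (0 : ℝ) 1)
    (z m : ℝ) (hz : z ∈ Set.Ioo (-1 : ℝ) 1)
    (q : ℝ → ℝ)
    (hsol : ∀ h : ℝ, 0 < h → F (q h) + h / 2 * q h = (1 - z + h * m) / 2) :
    Filter.Tendsto q Filter.atTop (nhds m) := by
  have key : ∀ᶠ h in Filter.atTop, ‖q h - m‖ ≤ 3 / h := by
    filter_upwards [Filter.eventually_gt_atTop 0] with h hh
    have e := hsol h hh
    have hq : q h - m = (1 - z - 2 * F (q h)) / h := by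
      field_simp
      linarith
    rw [hq, norm_div, Real.norm_eq_abs, Real.norm_eq_abs, abs_of_pos hh]
    have hF := hFbdd (q h)
    have h1 : |1 - z - 2 * F (q h)| ≤ 3 := by
      rw [abs_le]
      constructor <;> [nlinarith [hz.1, hz.2, hF.1, hF.2]; nlinarith [hz.1, hz.2, hF.1, hF.2]]
    gcongr
  have hlim : Filter.Tendsto (fun h : ℝ => 3 / h) Filter.atTop (nhds 0) :=
    tendsto_const_nhds.div_atTop Filter.tendsto_id
  have h0 : Filter.Tendsto (fun h => q h - m) Filter.atTop (nhds 0) :=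
    squeeze_zero_norm' key hlim
  have := h0.add (tendsto_const_nhds (x := m))
  simpa using this
end
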